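/- arXiv:0704.2988 — 7 statements merged into one kernel-verified Lean document; each statement's English description precedes it below -/
import Mathlib

section
/- Let m₀ and m be positive integers with m₀ dividing m and m > 1, let ω ∈ ℂ be a primitive m₀-th root of unity, and let m₁ be the product of the distinct prime divisors of m (the radical of m). Then ∑_{0 < j < m, gcd(j,m) = 1} ω^j equals μ(m₀) · (m/m₁) · φ(m₁/m₀) if m₀ divides m₁, and equals 0 otherwise, where φ is Euler's totient function and μ is the Möbius function. -/
/-!
Möbius inversion of the condition `gcd(j, m) = 1` turns the sum into
`∑_{d ∣ m} μ(d) ∑_{t < m/d} ω^{dt}`, and each inner geometric sum is `m/d` if `m₀ ∣ d` and `0`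
otherwise. Only squarefree `d` contribute, i.e. divisors of the radical `m₁`; writing
`d = m₀ e` with `e ∣ m₁/m₀` (coprime to `m₀`), the remaining sum is
`μ(m₀) (m/m₁) ∑_{e ∣ m₁/m₀} μ(e) (m₁/m₀)/e = μ(m₀) (m/m₁) φ(m₁/m₀)`.
-/

open Finset ArithmeticFunction UniqueFactorizationMonoid
open scoped ArithmeticFunction.Moebius

theorem sum_range_filter_dvd {M : Type*} [AddCommMonoid M] (f : ℕ → M) {d m : ℕ} (hd : d ∣ m) :
    ∑ j ∈ range m with d ∣ j, f j = ∑ t ∈ range (m / d), f (d * t) := by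
  rcases eq_or_ne d 0 with rfl | hd0
  · simp [Nat.eq_zero_of_zero_dvd hd]
  have himage : (range (m / d)).image (d * ·) = {j ∈ range m | d ∣ j} := by
    ext j
    simp only [mem_image, mem_filter, mem_range]
    constructor
    · rintro ⟨t, ht, rfl⟩
      exact ⟨(Nat.lt_div_iff_mul_lt' hd t).mp ht, dvd_mul_right d t⟩
    · rintro ⟨hj, t, rfl⟩
      exact ⟨t, (Nat.lt_div_iff_mul_lt' hd t).mpr hj, rfl⟩
  rw [← himage, sum_image fun a _ b _ h => Nat.eq_of_mul_eq_mul_left (Nat.pos_of_ne_zero hd0) h]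

theorem Nat.sum_divisors_mul_filter_dvd {M : Type*} [AddCommMonoid M] (f : ℕ → M) {k : ℕ}
    (hk : k ≠ 0) (n : ℕ) : ∑ d ∈ (k * n).divisors with k ∣ d, f d = ∑ e ∈ n.divisors, f (k * e) := by
  have himage : n.divisors.image (k * ·) = {d ∈ (k * n).divisors | k ∣ d} := by
    ext d
    simp only [mem_image, mem_filter, Nat.mem_divisors, mul_ne_zero_iff, ne_eq]
    constructor
    · rintro ⟨e, ⟨hen, hn⟩, rfl⟩
      exact ⟨⟨Nat.mul_dvd_mul_left k hen, hk, hn⟩, dvd_mul_right k e⟩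
    · rintro ⟨⟨hdkn, -, hn⟩, e, rfl⟩
      exact ⟨e, ⟨Nat.dvd_of_mul_dvd_mul_left (Nat.pos_of_ne_zero hk) hdkn, hn⟩, rfl⟩
  rw [← himage, sum_image fun a _ b _ h => Nat.eq_of_mul_eq_mul_left (Nat.pos_of_ne_zero hk) h]

theorem sum_divisors_moebius (R : Type*) [Ring R] (n : ℕ) :
    ∑ d ∈ n.divisors, (μ d : R) = if n = 1 then 1 else 0 := by
  have h := congrArg (· n) (coe_moebius_mul_coe_zeta (R := R))
  simp only [coe_mul_zeta_apply, intCoe_apply, one_apply] at h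
  exact h

theorem sum_divisors_moebius_mul_div_eq_totient (R : Type*) [Ring R] (n : ℕ) :
    ∑ d ∈ n.divisors, (μ d : R) * (n / d : ℕ) = n.totient := by
  rcases Nat.eq_zero_or_pos n with rfl | hn
  · simp
  rw [← (sum_eq_iff_sum_mul_moebius_eq (f := fun k => (k.totient : R)) (g := fun k => (k : R))).mp
    (fun k _ => by rw [← Nat.cast_sum, Nat.sum_totient]) n hn,
    Nat.sum_divisorsAntidiagonal (fun a b => (μ a : R) * (b : R))]

theorem sum_divisors_moebius_mul_eq_sum_divisors_radical {R : Type*} [Ring R] (f : ℕ → R)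
    {m : ℕ} (hm : m ≠ 0) :
    ∑ d ∈ m.divisors, (μ d : R) * f d = ∑ d ∈ (radical m).divisors, (μ d : R) * f d := by
  refine (sum_subset (Nat.divisors_subset_of_dvd hm radical_dvd_self) fun d hd hdr => ?_).symm
  have hsq : ¬Squarefree d := fun hsq => hdr (Nat.mem_divisors.mpr
    ⟨(dvd_radical_iff hsq.isRadical hm).mpr (Nat.dvd_of_mem_divisors hd), radical_ne_zero⟩)
  simp [moebius_eq_zero_of_not_squarefree hsq]

theorem sum_range_coprime_eq_sum_divisors_moebius {R : Type*} [CommRing R] (f : ℕ → R) (m : ℕ) :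
    ∑ j ∈ range m with j.gcd m = 1, f j =
      ∑ d ∈ m.divisors, (μ d : R) * ∑ t ∈ range (m / d), f (d * t) := by
  rcases eq_or_ne m 0 with rfl | hm
  · simp
  calc ∑ j ∈ range m with j.gcd m = 1, f j
      = ∑ j ∈ range m, ∑ d ∈ m.divisors with d ∣ j, (μ d : R) * f j := by
        rw [sum_filter]
        refine sum_congr rfl fun j _ => ?_
        have hdiv : {d ∈ m.divisors | d ∣ j} = (j.gcd m).divisors := by
          rw [← Nat.divisors_filter_dvd_of_dvd hm (Nat.gcd_dvd_right j m)]
          exact filter_congr fun d hd => by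
            rw [Nat.dvd_gcd_iff, and_iff_left (Nat.dvd_of_mem_divisors hd)]
        rw [← sum_mul, hdiv, sum_divisors_moebius]
        split_ifs <;> simp
    _ = ∑ d ∈ m.divisors, (μ d : R) * ∑ j ∈ range m with d ∣ j, f j := by
        simp only [sum_filter, mul_sum]
        rw [sum_comm]
        refine sum_congr rfl fun d _ => sum_congr rfl fun j _ => ?_
        split_ifs <;> simp
    _ = _ := sum_congr rfl fun d hd => by rw [sum_range_filter_dvd f (Nat.dvd_of_mem_divisors hd)]

theorem IsPrimitiveRoot.sum_range_pow_mul {R : Type*} [CommRing R] [IsDomain R] {ω : R} {k : ℕ}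
    (hω : IsPrimitiveRoot ω k) {d n : ℕ} (hk : k ∣ d * n) :
    ∑ t ∈ range n, ω ^ (d * t) = if k ∣ d then (n : R) else 0 := by
  simp only [pow_mul]
  split_ifs with hkd
  · simp [(hω.pow_eq_one_iff_dvd d).mpr hkd]
  · have hne : ω ^ d - 1 ≠ 0 := sub_ne_zero.mpr fun h => hkd ((hω.pow_eq_one_iff_dvd d).mp h)
    have hgeom := geom_sum_mul (ω ^ d) n
    rw [← pow_mul, (hω.pow_eq_one_iff_dvd _).mpr hk, sub_self] at hgeom
    exact (mul_eq_zero.mp hgeom).resolve_right hne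

theorem sum_divisors_filter_dvd_moebius_mul_div (R : Type*) [CommRing R] {k m : ℕ} (hm : m ≠ 0) :
    ∑ d ∈ m.divisors with k ∣ d, (μ d : R) * (m / d : ℕ) =
      if k ∣ radical m then (μ k : R) * (m / radical m : ℕ) * (radical m / k).totient else 0 := by
  split_ifs with hk
  · obtain ⟨n, hn⟩ := hk
    have hk0 : k ≠ 0 := left_ne_zero_of_mul (hn ▸ radical_ne_zero)
    have hn0 : n ≠ 0 := right_ne_zero_of_mul (hn ▸ radical_ne_zero)
    have hcop : k.Coprime n := (Nat.squarefree_mul_iff.mp (hn ▸ squarefree_radical)).1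
    have hknm : k * n ∣ m := hn ▸ radical_dvd_self
    have hterm : ∀ e ∈ n.divisors, (μ (k * e) : R) * (m / (k * e) : ℕ) =
        (μ k : R) * (m / (k * n) : ℕ) * ((μ e : R) * (n / e : ℕ)) := fun e he => by
      have hen : e ∣ n := Nat.dvd_of_mem_divisors he
      have hdiv : m / (k * e) = m / (k * n) * (n / e) := by
        rw [Nat.div_mul_div_comm hknm hen, mul_right_comm k n e,
          Nat.mul_div_mul_right _ _ (Nat.pos_of_ne_zero hn0)]
      rw [isMultiplicative_moebius.map_mul_of_coprime (hcop.coprime_dvd_right hen), hdiv]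
      push_cast
      ring
    calc ∑ d ∈ m.divisors with k ∣ d, (μ d : R) * (m / d : ℕ)
        = ∑ d ∈ m.divisors, (μ d : R) * if k ∣ d then ((m / d : ℕ) : R) else 0 := by
          simp only [sum_filter, mul_ite, mul_zero]
      _ = ∑ d ∈ (k * n).divisors with k ∣ d, (μ d : R) * (m / d : ℕ) := by
          rw [sum_divisors_moebius_mul_eq_sum_divisors_radical _ hm, hn]
          simp only [sum_filter, mul_ite, mul_zero]
      _ = ∑ e ∈ n.divisors, (μ k : R) * (m / (k * n) : ℕ) * ((μ e : R) * (n / e : ℕ)) := by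
          rw [Nat.sum_divisors_mul_filter_dvd _ hk0]
          exact sum_congr rfl hterm
      _ = _ := by
          rw [← mul_sum, sum_divisors_moebius_mul_div_eq_totient, hn,
            Nat.mul_div_cancel_left n (Nat.pos_of_ne_zero hk0)]
  · refine sum_eq_zero fun d hd => ?_
    obtain ⟨hdm, hkd⟩ := mem_filter.mp hd
    have hsq : ¬Squarefree d := fun hsq => hk (hkd.trans
      ((dvd_radical_iff hsq.isRadical hm).mpr (Nat.dvd_of_mem_divisors hdm)))
    simp [moebius_eq_zero_of_not_squarefree hsq]

theorem IsPrimitiveRoot.sum_range_coprime_pow {R : Type*} [CommRing R] [IsDomain R] {ω : R}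
    {k m : ℕ} (hω : IsPrimitiveRoot ω k) (hkm : k ∣ m) (hm : m ≠ 0) :
    ∑ j ∈ range m with j.gcd m = 1, ω ^ j =
      if k ∣ radical m then (μ k : R) * (m / radical m : ℕ) * (radical m / k).totient else 0 := by
  rw [sum_range_coprime_eq_sum_divisors_moebius, ← sum_divisors_filter_dvd_moebius_mul_div R hm,
    sum_filter]
  refine sum_congr rfl fun d hd => ?_
  rw [hω.sum_range_pow_mul (by rwa [Nat.mul_div_cancel' (Nat.dvd_of_mem_divisors hd)]), mul_ite,
    mul_zero]

theorem stmt_0_general (m₀ m m₁ : ℕ) (hdvd : m₀ ∣ m) (hm : 1 < m)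
    (hm₁ : m₁ = ∏ p ∈ m.primeFactors, p)
    (ω : ℂ) (hω : IsPrimitiveRoot ω m₀) :
    ∑ j ∈ (Finset.Ioo 0 m).filter (fun j => Nat.gcd j m = 1), ω ^ j =
      if m₀ ∣ m₁ then
        (ArithmeticFunction.moebius m₀ : ℂ) * ((m / m₁ : ℕ) : ℂ) *
          ((Nat.totient (m₁ / m₀) : ℕ) : ℂ)
      else 0 := by
  have hrange : {j ∈ Ioo 0 m | j.gcd m = 1} = {j ∈ range m | j.gcd m = 1} := by
    ext (_ | j) <;> simp [hm.ne']
  rw [hrange, hm₁, ← Nat.radical_eq_prod_primeFactors, hω.sum_range_coprime_pow hdvd (by omega)]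

theorem stmt_0 (m₀ m m₁ : ℕ) (hm₀ : 0 < m₀) (hdvd : m₀ ∣ m) (hm : 1 < m)
    (hm₁ : m₁ = ∏ p ∈ m.primeFactors, p)
    (ω : ℂ) (hω : IsPrimitiveRoot ω m₀) :
    ∑ j ∈ (Finset.Ioo 0 m).filter (fun j => Nat.gcd j m = 1), ω ^ j =
      if m₀ ∣ m₁ then
        (ArithmeticFunction.moebius m₀ : ℂ) * ((m / m₁ : ℕ) : ℂ) *
          ((Nat.totient (m₁ / m₀) : ℕ) : ℂ)
      else 0 :=
  stmt_0_general m₀ m m₁ hdvd hm hm₁ ω hω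
end

section
/- Let m be a positive integer and let ω ∈ ℂ be an m-th root of unity with ω ≠ 1. Then 1/2 ≤ (1/(2·φ(m))) · ∑_{0 < j ≤ m, gcd(j,m) = 1} |1 − ω^j|² ≤ 2. -/
/-!
Let `t ≥ 2` be the order of `ω`. Reduction mod `t` maps the units of `ZMod m` onto those of
`ZMod t` with fibres of equal size, so the sum of `‖1 - ω ^ j‖ ^ 2` over the units `j` is
`φ m / φ t` times the sum of `‖1 - z‖ ^ 2` over the primitive `t`-th roots of unity `z`. Each term
is at most `4`, which gives the upper bound. For the lower bound, `∏ (1 - z) = Φ_t(1)` is a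
nonzero integer, so the terms `‖1 - z‖ ^ 2` have product at least `1`, and by AM-GM their mean is
at least `1`.
-/

open Finset Polynomial
open scoped Nat

theorem MonoidHom.card_smul_sum_comp_of_surjective {G H M : Type*} [Group G] [Group H]
    [Fintype G] [Fintype H] [AddCommMonoid M] (π : G →* H) (hπ : Function.Surjective π)
    (F : H → M) : Nat.card H • ∑ g, F (π g) = Nat.card G • ∑ h, F h := by
  classical
  have hfiber (h : H) : #{g | π g = h} = Nat.card π.ker := by
    rw [MonoidHom.card_fiber_eq_of_mem_range π (hπ h) (hπ 1), Nat.card_eq_fintype_card,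
      Fintype.card_subtype]
    simp only [MonoidHom.mem_ker]
  have hcard : Nat.card G = Nat.card π.ker * Nat.card H := by
    rw [← π.ker.card_mul_index, Subgroup.index_ker, MonoidHom.range_eq_top.mpr hπ,
      Subgroup.card_top]
  rw [← sum_fiberwise univ π, hcard, smul_sum, smul_sum]
  refine sum_congr rfl fun h _ => ?_
  rw [sum_congr rfl fun g hg => by rw [(mem_filter.mp hg).2], sum_const, hfiber, mul_comm,
    mul_smul]

theorem ZMod.sum_units_eq_sum_filter_coprime {M : Type*} [AddCommMonoid M] (n : ℕ) [NeZero n]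
    (F : ℕ → M) : ∑ u : (ZMod n)ˣ, F (u : ZMod n).val = ∑ j ∈ range n with j.Coprime n, F j := by
  refine sum_nbij (fun u => (u : ZMod n).val) (fun u _ => ?_) (fun u _ v _ h => ?_)
    (fun j hj => ?_) (fun _ _ => rfl)
  · simpa using ⟨ZMod.val_lt _, ZMod.val_coe_unit_coprime u⟩
  · exact Units.ext (ZMod.val_injective n h)
  · simp only [coe_filter, mem_range, Set.mem_ofPred_eq] at hj
    exact ⟨ZMod.unitOfCoprime j hj.2, mem_coe.mpr (mem_univ _), by
      simp [ZMod.val_natCast, Nat.mod_eq_of_lt hj.1]⟩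

theorem IsPrimitiveRoot.sum_primitiveRoots_eq_sum_units {R M : Type*} [CommRing R] [IsDomain R]
    [AddCommMonoid M] {ζ : R} {k : ℕ} [NeZero k] (hζ : IsPrimitiveRoot ζ k) (f : R → M) :
    ∑ z ∈ primitiveRoots k R, f z = ∑ u : (ZMod k)ˣ, f (ζ ^ (u : ZMod k).val) := by
  rw [ZMod.sum_units_eq_sum_filter_coprime k (fun j => f (ζ ^ j))]
  symm
  have hk : 0 < k := Nat.pos_of_neZero k
  refine sum_nbij (ζ ^ ·) (fun j hj => ?_) (fun i hi j hj h => ?_) (fun z hz => ?_)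
    (fun _ _ => rfl)
  · rw [mem_filter, mem_range] at hj
    exact (mem_primitiveRoots hk).mpr (hζ.pow_of_coprime j hj.2)
  · rw [mem_coe, mem_filter, mem_range] at hi hj
    exact hζ.pow_inj hi.1 hj.1 h
  · rw [mem_coe, mem_primitiveRoots hk] at hz
    obtain ⟨i, hi, hcop, rfl⟩ := hζ.isPrimitiveRoot_iff.mp hz
    exact ⟨i, by simpa using ⟨hi, hcop⟩, rfl⟩

theorem IsPrimitiveRoot.totient_smul_sum_filter_coprime_pow {R M : Type*} [CommRing R]
    [IsDomain R] [AddCommMonoid M] {ω : R} {t m : ℕ} [NeZero m] (hω : IsPrimitiveRoot ω t)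
    (htm : t ∣ m) (f : R → M) :
    φ t • ∑ j ∈ range m with j.Coprime m, f (ω ^ j) = φ m • ∑ z ∈ primitiveRoots t R, f z := by
  have : NeZero t := ⟨fun ht => NeZero.ne m (Nat.eq_zero_of_zero_dvd (ht ▸ htm))⟩
  have hval (u : (ZMod m)ˣ) : ω ^ (u : ZMod m).val = ω ^ (ZMod.unitsMap htm u : ZMod t).val := by
    rw [ZMod.unitsMap_val, ZMod.cast_eq_val, ZMod.val_natCast, hω.eq_orderOf, pow_mod_orderOf]
  rw [← ZMod.sum_units_eq_sum_filter_coprime m (fun j => f (ω ^ j)),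
    hω.sum_primitiveRoots_eq_sum_units, ← ZMod.card_units_eq_totient,
    ← ZMod.card_units_eq_totient, ← Nat.card_eq_fintype_card, ← Nat.card_eq_fintype_card,
    sum_congr rfl fun u _ => by rw [hval]]
  exact (ZMod.unitsMap htm).card_smul_sum_comp_of_surjective (ZMod.unitsMap_surjective htm)
    fun v => f (ω ^ (v : ZMod t).val)

theorem Finset.card_le_sum_of_one_le_prod {ι : Type*} {s : Finset ι} {x : ι → ℝ}
    (hpos : ∀ i ∈ s, 0 < x i) (hprod : 1 ≤ ∏ i ∈ s, x i) : (#s : ℝ) ≤ ∑ i ∈ s, x i := by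
  have hlog : 0 ≤ ∑ i ∈ s, Real.log (x i) := by
    rw [← Real.log_prod fun i hi => (hpos i hi).ne']
    exact Real.log_nonneg hprod
  have hsub := sum_le_sum fun i hi => Real.log_le_sub_one_of_pos (hpos i hi)
  rw [sum_sub_distrib, sum_const, nsmul_one] at hsub
  linarith

theorem one_le_prod_primitiveRoots_norm_one_sub_sq {t : ℕ} (ht : t ≠ 1) :
    1 ≤ ∏ z ∈ primitiveRoots t ℂ, ‖1 - z‖ ^ 2 := by
  rcases Nat.eq_zero_or_pos t with rfl | ht0
  · simp
  obtain ⟨k, hk⟩ : ∃ k : ℤ, (cyclotomic t ℂ).eval 1 = k :=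
    ⟨_, by rw [← map_cyclotomic_int, eval_one_map, eq_intCast]⟩
  have hprod : ∏ z ∈ primitiveRoots t ℂ, (1 - z) = k := by
    rw [← hk, cyclotomic_eq_prod_X_sub_primitiveRoots (Complex.isPrimitiveRoot_exp t ht0.ne'),
      eval_prod]
    simp only [eval_sub, eval_X, eval_C]
  have hk0 : k ≠ 0 := by
    rintro rfl
    have hroot : (cyclotomic t ℂ).IsRoot 1 := by rw [IsRoot, hk, Int.cast_zero]
    exact ht (IsPrimitiveRoot.one_left_iff.mp ((isRoot_cyclotomic_iff_charZero ht0).mp hroot))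
  have hk1 : (1 : ℝ) ≤ |(k : ℝ)| := by exact_mod_cast Int.one_le_abs hk0
  calc (1 : ℝ) ≤ |(k : ℝ)| ^ 2 := one_le_pow₀ hk1
    _ = ∏ z ∈ primitiveRoots t ℂ, ‖1 - z‖ ^ 2 := by
      rw [prod_pow, ← norm_prod, hprod, Complex.norm_intCast]

theorem totient_le_sum_primitiveRoots_norm_one_sub_sq {t : ℕ} (ht : t ≠ 1) :
    (φ t : ℝ) ≤ ∑ z ∈ primitiveRoots t ℂ, ‖1 - z‖ ^ 2 := by
  rcases Nat.eq_zero_or_pos t with rfl | ht0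
  · simp
  rw [← (Complex.isPrimitiveRoot_exp t ht0.ne').card_primitiveRoots]
  refine card_le_sum_of_one_le_prod (fun z hz => ?_) (one_le_prod_primitiveRoots_norm_one_sub_sq ht)
  have hz1 : z ≠ 1 := by
    rintro rfl
    exact ht (IsPrimitiveRoot.one_left_iff.mp ((mem_primitiveRoots ht0).mp hz))
  have : 1 - z ≠ 0 := sub_ne_zero.mpr hz1.symm
  positivity

theorem totient_le_sum_filter_coprime_norm_one_sub_pow_sq {ω : ℂ} {m : ℕ} [NeZero m]
    (hω : ω ^ m = 1) (hω1 : ω ≠ 1) :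
    (φ m : ℝ) ≤ ∑ j ∈ range m with j.Coprime m, ‖1 - ω ^ j‖ ^ 2 := by
  have htm : orderOf ω ∣ m := orderOf_dvd_of_pow_eq_one hω
  have hfib := (IsPrimitiveRoot.orderOf ω).totient_smul_sum_filter_coprime_pow htm
    fun z => ‖1 - z‖ ^ 2
  simp only [nsmul_eq_mul] at hfib
  have hφt : (0 : ℝ) < φ (orderOf ω) := by
    exact_mod_cast Nat.totient_pos.mpr (Nat.pos_of_dvd_of_pos htm (Nat.pos_of_neZero m))
  refine le_of_mul_le_mul_left ?_ hφt
  calc (φ (orderOf ω) : ℝ) * φ m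
      ≤ φ m * ∑ z ∈ primitiveRoots (orderOf ω) ℂ, ‖1 - z‖ ^ 2 := by
        rw [mul_comm]
        gcongr
        exact totient_le_sum_primitiveRoots_norm_one_sub_sq (mt orderOf_eq_one_iff.mp hω1)
    _ = _ := hfib.symm

theorem sum_filter_coprime_norm_one_sub_pow_sq_le {ω : ℂ} {m : ℕ} [NeZero m] (hω : ω ^ m = 1) :
    ∑ j ∈ range m with j.Coprime m, ‖1 - ω ^ j‖ ^ 2 ≤ 4 * φ m := by
  have hnorm : ‖ω‖ = 1 := Complex.norm_eq_one_of_pow_eq_one hω (NeZero.ne m)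
  have hcard : #{j ∈ range m | j.Coprime m} = φ m := by
    rw [Nat.totient_eq_card_coprime]
    simp_rw [Nat.coprime_comm]
  calc ∑ j ∈ range m with j.Coprime m, ‖1 - ω ^ j‖ ^ 2
      ≤ #{j ∈ range m | j.Coprime m} • (2 : ℝ) ^ 2 := by
        refine sum_le_card_nsmul _ _ _ fun j _ => ?_
        gcongr
        calc ‖1 - ω ^ j‖ ≤ ‖(1 : ℂ)‖ + ‖ω ^ j‖ := norm_sub_le _ _
          _ = 2 := by rw [norm_pow, hnorm]; norm_num
    _ = 4 * φ m := by rw [hcard, nsmul_eq_mul]; ring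

theorem Nat.filter_Ioc_coprime_eq_filter_range {m : ℕ} (hm : 1 < m) :
    {j ∈ Ioc 0 m | j.Coprime m} = {j ∈ range m | j.Coprime m} := by
  ext j
  simp only [mem_filter, mem_Ioc, mem_range]
  constructor
  · rintro ⟨⟨-, hjm⟩, hcop⟩
    refine ⟨lt_of_le_of_ne hjm ?_, hcop⟩
    rintro rfl
    exact hm.ne' ((Nat.coprime_self j).mp hcop)
  · rintro ⟨hjm, hcop⟩
    refine ⟨⟨Nat.pos_of_ne_zero ?_, hjm.le⟩, hcop⟩
    rintro rfl
    exact hm.ne' ((Nat.coprime_zero_left m).mp hcop)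

theorem stmt_1 (m : ℕ) (hm : 0 < m) (ω : ℂ) (hω : ω ^ m = 1) (hω1 : ω ≠ 1) :
    1 / 2 ≤ (1 / (2 * (Nat.totient m : ℝ))) *
        ∑ j ∈ (Finset.Ioc 0 m).filter (fun j => Nat.gcd j m = 1),
          ‖1 - ω ^ j‖ ^ 2 ∧
      (1 / (2 * (Nat.totient m : ℝ))) *
        ∑ j ∈ (Finset.Ioc 0 m).filter (fun j => Nat.gcd j m = 1),
          ‖1 - ω ^ j‖ ^ 2 ≤ 2 := by
  have : NeZero m := ⟨hm.ne'⟩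
  have hm1 : 1 < m := by
    refine lt_of_le_of_ne hm fun h => hω1 ?_
    rwa [← h, pow_one] at hω
  have hφ : (0 : ℝ) < φ m := by exact_mod_cast Nat.totient_pos.mpr hm
  simp_rw [← Nat.coprime_iff_gcd_eq_one, Nat.filter_Ioc_coprime_eq_filter_range hm1]
  have hlow := totient_le_sum_filter_coprime_norm_one_sub_pow_sq hω hω1
  have hup := sum_filter_coprime_norm_one_sub_pow_sq_le hω
  constructor
  · rw [div_mul_eq_mul_div, one_mul, le_div_iff₀ (by positivity)]
    linarith
  · rw [div_mul_eq_mul_div, one_mul, div_le_iff₀ (by positivity)]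
    linarith
end

section
/- Let A be a finite abelian group (written additively) of exponent m, let u ∈ A, and let χ be a character of A with χ(u) ≠ 1. Then 1/(2·|A|) ≤ (1/(2·φ(m)·|A|)) · ∑_{0 < j ≤ m, gcd(j,m) = 1} |1 − χ(u)^j|² ≤ 2/|A|. -/
/-!
Write `z = χ u`. Since `‖z‖ = 1`, each term is `‖1 - z ^ j‖ ^ 2 = 2 - 2 Re (z ^ j) ≤ 4`, which gives
the upper bound, and the lower bound amounts to `Re ∑_{j ∈ (ℤ/m)ˣ} z ^ j ≤ φ(m) / 2`. If `z` has
order `d ∣ m`, reduction mod `d` maps `(ℤ/m)ˣ` onto `(ℤ/d)ˣ` with fibres of size `φ(m) / φ(d)`, and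
`j ↦ z ^ j` maps `(ℤ/d)ˣ` bijectively onto the primitive `d`-th roots of unity, whose sum is `μ(d)`
by Möbius inversion of `∑_{ζ ^ d = 1} ζ = [d = 1]`. Hence this Ramanujan sum equals
`φ(m) μ(d) / φ(d)`, and `z ≠ 1` gives `d ≥ 2`, so either `μ(d) ≤ 0` or `φ(d) ≥ 2`.
-/

open Finset Polynomial
open scoped Nat ArithmeticFunction.Moebius

namespace IsPrimitiveRoot

variable {R : Type*} [CommRing R] [IsDomain R] {ζ : R} {n : ℕ}

theorem nthRootsFinset_one_eq_image [DecidableEq R] (h : IsPrimitiveRoot ζ n) :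
    nthRootsFinset n (1 : R) = (range n).image (ζ ^ ·) := by
  rcases n.eq_zero_or_pos with rfl | hn
  · simp
  ext x
  have : NeZero n := ⟨hn.ne'⟩
  simp only [mem_image, mem_range, Polynomial.mem_nthRootsFinset hn]
  refine ⟨h.eq_pow_of_pow_eq_one, ?_⟩
  rintro ⟨i, -, rfl⟩
  rw [← pow_mul, mul_comm, pow_mul, h.pow_eq_one, one_pow]

theorem sum_nthRootsFinset_one (h : IsPrimitiveRoot ζ n) (hn : 1 < n) :
    ∑ x ∈ nthRootsFinset n (1 : R), x = 0 := by
  classical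
  rw [h.nthRootsFinset_one_eq_image,
    sum_image fun i hi j hj => h.pow_inj (mem_range.1 hi) (mem_range.1 hj)]
  exact h.geom_sum_eq_zero hn

theorem sum_primitiveRoots (h : IsPrimitiveRoot ζ n) :
    ∑ x ∈ primitiveRoots n R, x = μ n := by
  classical
  rcases n.eq_zero_or_pos with rfl | hn
  · simp
  have hdiv : ∀ k > 0, k ∈ {k | k ∣ n} →
      ∑ i ∈ k.divisors, ∑ x ∈ primitiveRoots i R, x = if k = 1 then 1 else 0 := by
    intro k hk0 hkn
    rw [← sum_biUnion fun i _ j _ hij => disjoint hij, ← nthRoots_one_eq_biUnion_primitiveRoots]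
    split_ifs with hk1
    · simp [hk1, IsPrimitiveRoot.one.nthRootsFinset_one_eq_image]
    · have hk : IsPrimitiveRoot (ζ ^ (n / k)) k := by
        simpa [Nat.div_div_self hkn hn.ne'] using
          h.pow_of_dvd (Nat.div_pos (Nat.le_of_dvd hn hkn) hk0).ne' (Nat.div_dvd_of_dvd hkn)
      exact hk.sum_nthRootsFinset_one (by omega)
  rw [← (ArithmeticFunction.sum_eq_iff_sum_mul_moebius_eq_on _
    (fun _ _ => Nat.dvd_trans)).1 hdiv n hn dvd_rfl,
    sum_eq_single (n, 1) (fun x hx hne => ?_) (by simp [hn.ne'])]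
  · simp
  · obtain ⟨hx, -⟩ := Nat.mem_divisorsAntidiagonal.1 hx
    have : x.2 ≠ 1 := fun h1 => hne (Prod.ext (by simpa [h1] using hx) h1)
    simp [this]

theorem sum_units_pow_val [NeZero n] (h : IsPrimitiveRoot ζ n) :
    ∑ a : (ZMod n)ˣ, ζ ^ (a : ZMod n).val = ∑ x ∈ primitiveRoots n R, x := by
  refine sum_nbij (fun a => ζ ^ (a : ZMod n).val) (fun a _ => ?_) (fun a _ b _ hab => ?_)
    (fun x hx => ?_) fun _ _ => rfl
  · exact (mem_primitiveRoots (NeZero.pos n)).2 (h.pow_of_coprime _ (ZMod.val_coe_unit_coprime a))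
  · exact Units.ext (ZMod.val_injective n (h.pow_inj (ZMod.val_lt _) (ZMod.val_lt _) hab))
  · obtain ⟨i, hin, hi, rfl⟩ :=
      h.isPrimitiveRoot_iff.1 ((mem_primitiveRoots (NeZero.pos n)).1 hx)
    exact ⟨ZMod.unitOfCoprime i hi, mem_coe.2 (mem_univ _), by simp [Nat.mod_eq_of_lt hin]⟩

end IsPrimitiveRoot

theorem MonoidHom.sum_comp_of_surjective {G H M : Type*} [Group G] [Fintype G] [Group H]
    [Fintype H] [DecidableEq H] [AddCommMonoid M] {π : G →* H} (hπ : Function.Surjective π)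
    (f : H → M) : ∑ x, f (π x) = #{x | π x = 1} • ∑ y, f y := by
  rw [Finset.sum_comp, smul_sum, image_univ_of_surjective hπ]
  exact sum_congr rfl fun y _ => by rw [card_fiber_eq_of_mem_range π (hπ y) ⟨1, map_one π⟩]

theorem IsPrimitiveRoot.totient_mul_sum_units_pow_val {R : Type*} [CommRing R] [IsDomain R]
    {ζ : R} {d m : ℕ} [NeZero m] (h : IsPrimitiveRoot ζ d) (hdm : d ∣ m) :
    (φ d : R) * ∑ a : (ZMod m)ˣ, ζ ^ (a : ZMod m).val = φ m * μ d := by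
  classical
  have : NeZero d := ⟨fun hd => NeZero.ne m (Nat.eq_zero_of_zero_dvd (hd ▸ hdm))⟩
  set π := ZMod.unitsMap hdm
  have hπ : Function.Surjective π := ZMod.unitsMap_surjective hdm
  have hval (a : (ZMod m)ˣ) : ζ ^ (a : ZMod m).val = ζ ^ (π a : ZMod d).val := by
    rw [ZMod.unitsMap_val, ZMod.cast_eq_val, ZMod.val_natCast, h.eq_orderOf, pow_mod_orderOf]
  have hcard : φ m = #{a | π a = 1} * φ d := by
    simpa [ZMod.card_units_eq_totient] using
      MonoidHom.sum_comp_of_surjective hπ fun _ => (1 : ℕ)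
  rw [sum_congr rfl fun a _ => hval a,
    MonoidHom.sum_comp_of_surjective hπ fun b => ζ ^ (b : ZMod d).val, h.sum_units_pow_val,
    h.sum_primitiveRoots, hcard, nsmul_eq_mul]
  push_cast
  ring

theorem Nat.sum_filter_gcd_eq_one_Ioc_eq_sum_units {M : Type*} [AddCommMonoid M] {m : ℕ}
    [NeZero m] (hm : m ≠ 1) (f : ℕ → M) :
    ∑ j ∈ Ioc 0 m with j.gcd m = 1, f j = ∑ a : (ZMod m)ˣ, f (a : ZMod m).val := by
  symm
  refine sum_nbij (fun a => (a : ZMod m).val) (fun a _ => ?_) (fun a _ b _ hab => ?_)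
    (fun j hj => ?_) fun _ _ => rfl
  · have hco : (a : ZMod m).val.Coprime m := ZMod.val_coe_unit_coprime a
    have hpos : 0 < (a : ZMod m).val :=
      Nat.pos_of_ne_zero fun h0 => hm (Nat.coprime_zero_left m |>.1 (h0 ▸ hco))
    simpa [hpos, (ZMod.val_lt _).le] using hco
  · exact Units.ext (ZMod.val_injective m hab)
  · obtain ⟨⟨-, hjm⟩, hco⟩ : (0 < j ∧ j ≤ m) ∧ j.Coprime m := by simpa using hj
    have hjm : j < m := lt_of_le_of_ne hjm fun h => hm (by simpa [h] using hco)
    exact ⟨ZMod.unitOfCoprime j hco, mem_coe.2 (mem_univ _), by simp [Nat.mod_eq_of_lt hjm]⟩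

theorem Nat.card_filter_gcd_eq_one_Ioc (m : ℕ) : #{j ∈ Ioc 0 m | j.gcd m = 1} = φ m := by
  rw [← Nat.filter_coprime_Ico_eq_totient m 1]
  congr 1
  ext j
  simp only [mem_filter, mem_Ioc, mem_Ico, Nat.coprime_comm, Nat.Coprime]
  omega

theorem Complex.sq_norm_one_sub_of_norm_eq_one {w : ℂ} (hw : ‖w‖ = 1) :
    ‖1 - w‖ ^ 2 = 2 - 2 * w.re := by
  rw [Complex.sq_norm, Complex.normSq_sub, Complex.normSq_one, ← Complex.sq_norm, hw, one_mul,
    Complex.conj_re]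
  ring

theorem Complex.re_sum_coprime_pow_le_totient_div_two {z : ℂ} {m : ℕ} (hzm : z ^ m = 1)
    (hz : z ≠ 1) :
    (∑ j ∈ Ioc 0 m with j.gcd m = 1, z ^ j).re ≤ φ m / 2 := by
  rcases eq_or_ne m 0 with rfl | hm0
  · simp
  have : NeZero m := ⟨hm0⟩
  have hm1 : m ≠ 1 := by rintro rfl; exact hz (by simpa using hzm)
  set d := orderOf z
  have hd0 : 0 < d := orderOf_pos_iff.2 (isOfFinOrder_iff_pow_eq_one.2 ⟨m, by omega, hzm⟩)
  have hramanujan := congrArg Complex.re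
    ((IsPrimitiveRoot.orderOf z).totient_mul_sum_units_pow_val (orderOf_dvd_of_pow_eq_one hzm))
  rw [← Nat.sum_filter_gcd_eq_one_Ioc_eq_sum_units hm1] at hramanujan
  simp only [Complex.re_ofReal_mul, ← Complex.ofReal_natCast, ← Complex.ofReal_intCast,
    Complex.ofReal_re] at hramanujan
  have hφd : 0 < (φ d : ℝ) := by exact_mod_cast Nat.totient_pos.2 hd0
  rcases le_or_gt (μ d) 0 with hμ | hμ
  · have : (μ d : ℝ) ≤ 0 := by exact_mod_cast hμ
    nlinarith [(φ m).cast_nonneg (α := ℝ)]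
  · have hμ1 : μ d = 1 := le_antisymm (abs_le.1 ArithmeticFunction.abs_moebius_le_one).2 hμ
    have hφd2 : 2 ≤ (φ d : ℝ) := by
      have : φ d ≠ 1 := by
        rw [Ne, Nat.totient_eq_one_iff]
        rintro (hd | hd)
        · exact hz (orderOf_eq_one_iff.1 hd)
        · simp [hd, ArithmeticFunction.moebius_apply_prime Nat.prime_two] at hμ1
      have : 1 < φ d := by have := Nat.totient_pos.2 hd0; omega
      exact_mod_cast this
    rw [hμ1, Int.cast_one, mul_one] at hramanujan
    nlinarith [(φ m).cast_nonneg (α := ℝ)]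

theorem Complex.totient_le_sum_sq_norm_one_sub_pow {z : ℂ} {m : ℕ} (hzm : z ^ m = 1)
    (hz : z ≠ 1) :
    (φ m : ℝ) ≤ ∑ j ∈ Ioc 0 m with j.gcd m = 1, ‖1 - z ^ j‖ ^ 2 ∧
      ∑ j ∈ Ioc 0 m with j.gcd m = 1, ‖1 - z ^ j‖ ^ 2 ≤ 4 * φ m := by
  rcases eq_or_ne m 0 with rfl | hm0
  · simp
  have hnorm (j : ℕ) : ‖z ^ j‖ = 1 := by
    rw [norm_pow, Complex.norm_eq_one_of_pow_eq_one hzm hm0, one_pow]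
  have hsum : ∑ j ∈ Ioc 0 m with j.gcd m = 1, ‖1 - z ^ j‖ ^ 2 =
      2 * φ m - 2 * (∑ j ∈ Ioc 0 m with j.gcd m = 1, z ^ j).re := by
    simp only [Complex.sq_norm_one_sub_of_norm_eq_one (hnorm _), sum_sub_distrib, sum_const,
      ← mul_sum, Complex.re_sum, nsmul_eq_mul, Nat.card_filter_gcd_eq_one_Ioc]
    ring
  refine ⟨by linarith [Complex.re_sum_coprime_pow_le_totient_div_two hzm hz], ?_⟩
  rw [← Nat.card_filter_gcd_eq_one_Ioc, mul_comm, ← nsmul_eq_mul]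
  refine sum_le_card_nsmul _ _ _ fun j _ => ?_
  rw [Complex.sq_norm_one_sub_of_norm_eq_one (hnorm j)]
  linarith [(abs_le.1 (Complex.abs_re_le_norm (z ^ j))).1, hnorm j]

theorem stmt_4 (A : Type*) [AddCommGroup A] [Fintype A]
    (m : ℕ) (hm : m = AddMonoid.exponent A)
    (u : A) (χ : AddChar A ℂ) (hχu : χ u ≠ 1) :
    1 / (2 * (Fintype.card A : ℝ)) ≤
        (1 / (2 * (Nat.totient m : ℝ) * (Fintype.card A : ℝ))) *
          ∑ j ∈ (Finset.Ioc 0 m).filter (fun j => Nat.gcd j m = 1),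
            ‖1 - χ u ^ j‖ ^ 2 ∧
      (1 / (2 * (Nat.totient m : ℝ) * (Fintype.card A : ℝ))) *
          ∑ j ∈ (Finset.Ioc 0 m).filter (fun j => Nat.gcd j m = 1),
            ‖1 - χ u ^ j‖ ^ 2 ≤ 2 / (Fintype.card A : ℝ) := by
  have hm0 : m ≠ 0 := hm ▸ AddMonoid.exponent_ne_zero_of_finite
  have hzm : χ u ^ m = 1 := by
    rw [← AddChar.map_nsmul_eq_pow, hm, AddMonoid.exponent_nsmul_eq_zero, AddChar.map_zero_eq_one]
  obtain ⟨hlow, hup⟩ := Complex.totient_le_sum_sq_norm_one_sub_pow hzm hχu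
  have hφ : (0 : ℝ) < φ m := by exact_mod_cast Nat.totient_pos.2 (Nat.pos_of_ne_zero hm0)
  have hA : (0 : ℝ) < Fintype.card A := by exact_mod_cast Fintype.card_pos
  rw [one_div_mul_eq_div]
  constructor
  · rw [div_le_div_iff₀ (by positivity) (by positivity)]
    nlinarith
  · rw [div_le_div_iff₀ (by positivity) hA]
    nlinarith
end

section
/- Let A be a finite abelian group (written additively), H a subgroup of A, χ a character of H, and u ∈ A. Let k be the smallest positive integer such that k·u ∈ H and χ(k·u) = 1, and let k₀ be the smallest positive integer such that k₀·u ∈ H. Then the number of characters ψ of A whose restriction to H equals χ and which satisfy ψ(u) ≠ 1 is [A:H]·(k−1)/k if k₀ = k, and [A:H] if k₀ < k. -/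
/-!
Restriction of characters from `A` to `H` has as kernel the characters of `A ⧸ H`, so it is onto by
counting, and the extensions of `χ` are the `ψ₀ · (θ ∘ mk)` for one fixed extension `ψ₀` and `θ`
ranging over the characters of `A ⧸ H`. Then `ψ(u) = ψ₀(u) θ(q)`, where the image `q` of `u` has
order `k₀`. The values `θ(q)` are exactly the `k₀`-th roots of unity, each taken `[A:H] / k₀`
times, so `ψ(u) = 1` for `[A:H] / k₀` extensions if `ψ₀(u)^k₀ = χ(k₀ u) = 1`, that is if `k₀ = k`,
and for none otherwise.
-/

namespace AddChar

section CommMonoid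

variable {G M : Type*} [AddCommGroup G] [CommMonoid M]

def restrictHom (N : AddSubgroup G) : AddChar G M →* AddChar N M where
  toFun ψ := ψ.compAddMonoidHom N.subtype
  map_one' := rfl
  map_mul' _ _ := rfl

@[simp]
lemma restrictHom_apply (N : AddSubgroup G) (ψ : AddChar G M) (x : N) :
    restrictHom N ψ x = ψ x := rfl

lemma mem_ker_restrictHom {N : AddSubgroup G} {ψ : AddChar G M} :
    ψ ∈ (restrictHom N).ker ↔ ∀ x ∈ N, ψ x = 1 := by
  simp [MonoidHom.mem_ker, AddChar.ext_iff]

def restrictHomKerEquiv (N : AddSubgroup G) :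
    (restrictHom (M := M) N).ker ≃* AddChar (G ⧸ N) M where
  toFun ψ := toAddMonoidHomEquiv.symm <| QuotientAddGroup.lift N (toAddMonoidHomEquiv ψ.1)
    fun x hx => mem_ker_restrictHom.1 ψ.2 x hx
  invFun θ := ⟨θ.compAddMonoidHom (QuotientAddGroup.mk' N), mem_ker_restrictHom.2 fun x hx => by
    simp [(QuotientAddGroup.eq_zero_iff x).2 hx]⟩
  map_mul' _ _ := by ext x; induction x using QuotientAddGroup.induction_on; rfl
  left_inv _ := rfl
  right_inv θ := by ext x; induction x using QuotientAddGroup.induction_on; rfl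

def evalHom (a : G) : AddChar G M →* M where
  toFun ψ := ψ a
  map_one' := rfl
  map_mul' _ _ := rfl

@[simp]
lemma evalHom_apply (a : G) (ψ : AddChar G M) : evalHom a ψ = ψ a := rfl

end CommMonoid

section DivisionCommMonoid

variable {G M : Type*} [AddCommGroup G] [DivisionCommMonoid M]

lemma ker_toHomUnits_evalHom (q : G) :
    (evalHom (M := M) q).toHomUnits.ker = (restrictHom (AddSubgroup.zmultiples q)).ker := by
  ext ψ
  rw [mem_ker_restrictHom, AddSubgroup.forall_mem_zmultiples, MonoidHom.mem_ker, Units.ext_iff]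
  simp only [MonoidHom.coe_toHomUnits, evalHom_apply, Units.val_one, map_zsmul_eq_zpow]
  exact ⟨fun h n => by rw [h, one_zpow], fun h => by simpa using h 1⟩

end DivisionCommMonoid

section Complex

variable {G : Type*} [AddCommGroup G] [Finite G]

lemma natCard_eq : Nat.card (AddChar G ℂ) = Nat.card G := by
  have := Fintype.ofFinite G
  rw [Nat.card_eq_fintype_card, card_eq, Nat.card_eq_fintype_card]

lemma card_ker_restrictHom (N : AddSubgroup G) :
    Nat.card (restrictHom (M := ℂ) N).ker = N.index := by
  rw [Nat.card_congr (restrictHomKerEquiv N).toEquiv, natCard_eq, AddSubgroup.index]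

lemma restrictHom_surjective (N : AddSubgroup G) :
    Function.Surjective (restrictHom (M := ℂ) N) := by
  refine MonoidHom.surjective_of_card_ker_le_div _ (le_of_eq ?_)
  rw [card_ker_restrictHom, natCard_eq, natCard_eq, ← N.card_mul_index,
    Nat.mul_div_cancel_left _ Nat.card_pos]

lemma index_ker_restrictHom (N : AddSubgroup G) :
    (restrictHom (M := ℂ) N).ker.index = Nat.card N := by
  rw [Subgroup.index_ker, MonoidHom.range_eq_top.2 (restrictHom_surjective N), Subgroup.card_top,
    natCard_eq]

/-- The range has `addOrderOf q` elements, as many as there can be roots of unity of that order. -/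
lemma range_toHomUnits_evalHom (q : G) :
    (evalHom (M := ℂ) q).toHomUnits.range = rootsOfUnity (addOrderOf q) ℂ := by
  have : NeZero (addOrderOf q) := ⟨(addOrderOf_pos q).ne'⟩
  refine Subgroup.eq_of_le_of_card_ge ?_ ?_
  · rintro _ ⟨ψ, rfl⟩
    rw [mem_rootsOfUnity, Units.ext_iff]
    simp [← map_nsmul_eq_pow]
  · rw [← Subgroup.index_ker, ker_toHomUnits_evalHom, index_ker_restrictHom, Nat.card_zmultiples]
    exact card_rootsOfUnity ℂ _

lemma card_apply_eq (q : G) (c : ℂ) :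
    Nat.card {ψ : AddChar G ℂ // ψ q = c} =
      if c ^ addOrderOf q = 1 then Nat.card G / addOrderOf q else 0 := by
  have : NeZero (addOrderOf q) := ⟨(addOrderOf_pos q).ne'⟩
  split_ifs with hc
  · obtain ⟨ψ₁, hψ₁⟩ :
        (rootsOfUnity.mkOfPowEq c hc : ℂˣ) ∈ (evalHom (M := ℂ) q).toHomUnits.range := by
      rw [range_toHomUnits_evalHom]; exact SetLike.coe_mem _
    have hfiber (ψ : AddChar G ℂ) :
        ψ q = c ↔ ψ ∈ (evalHom q).toHomUnits ⁻¹' {(evalHom q).toHomUnits ψ₁} := by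
      simp [Units.ext_iff, hψ₁]
    rw [Nat.card_congr ((Equiv.subtypeEquivRight hfiber).trans (MonoidHom.fiberEquivKer _ ψ₁)),
      ker_toHomUnits_evalHom, card_ker_restrictHom]
    refine Nat.eq_div_of_mul_eq_right (addOrderOf_pos q).ne' ?_
    rw [← Nat.card_zmultiples, AddSubgroup.card_mul_index]
  · have : IsEmpty {ψ : AddChar G ℂ // ψ q = c} := ⟨fun ⟨ψ, hψ⟩ => hc <| by
      rw [← hψ, ← map_nsmul_eq_pow, addOrderOf_nsmul_eq_zero, map_zero_eq_one]⟩
    exact Nat.card_of_isEmpty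

lemma card_extension_apply_ne_one {N : AddSubgroup G} {χ : AddChar N ℂ} {ψ₀ : AddChar G ℂ}
    (hψ₀ : restrictHom N ψ₀ = χ) (u : G) :
    Nat.card {ψ : AddChar G ℂ // (∀ x : N, ψ x = χ x) ∧ ψ u ≠ 1} =
      N.index - Nat.card {θ : AddChar (G ⧸ N) ℂ // θ u = (ψ₀ u)⁻¹} := by
  let e : AddChar (G ⧸ N) ℂ ≃ restrictHom N ⁻¹' {restrictHom N ψ₀} :=
    (restrictHomKerEquiv N).symm.toEquiv.trans ((restrictHom N).fiberEquivKer ψ₀).symm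
  have hext (ψ : AddChar G ℂ) :
      (∀ x : N, ψ x = χ x) ↔ ψ ∈ restrictHom N ⁻¹' {restrictHom N ψ₀} := by
    simp [hψ₀, AddChar.ext_iff]
  have hval (θ : AddChar (G ⧸ N) ℂ) : ¬ θ u = (ψ₀ u)⁻¹ ↔ (e θ : AddChar G ℂ) u ≠ 1 :=
    ((mul_eq_one_iff_inv_eq₀ (ψ₀.val_isUnit u).ne_zero).trans eq_comm).not.symm
  calc Nat.card {ψ : AddChar G ℂ // (∀ x : N, ψ x = χ x) ∧ ψ u ≠ 1}
      = Nat.card {θ : AddChar (G ⧸ N) ℂ // ¬ θ u = (ψ₀ u)⁻¹} := by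
        refine Nat.card_congr <|
          (Equiv.subtypeEquivRight fun ψ => and_congr_left' (hext ψ)).trans <|
          (Equiv.subtypeSubtypeEquivSubtypeInter _ _).symm.trans (e.subtypeEquiv hval).symm
    _ = N.index - Nat.card {θ : AddChar (G ⧸ N) ℂ // θ u = (ψ₀ u)⁻¹} := by
        rw [Nat.card_eq_fintype_card, Fintype.card_subtype_compl, ← Nat.card_eq_fintype_card,
          ← Nat.card_eq_fintype_card, natCard_eq, AddSubgroup.index]

end Complex

end AddChar

theorem stmt_5 (A : Type*) [AddCommGroup A] [Fintype A]
    (H : AddSubgroup A) (χ : AddChar H ℂ) (u : A)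
    (k k₀ : ℕ) (hk_pos : 0 < k)
    (hk_mem : k • u ∈ H) (hk_one : χ ⟨k • u, hk_mem⟩ = 1)
    (hk_min : ∀ l : ℕ, 0 < l → ∀ hl : l • u ∈ H, χ ⟨l • u, hl⟩ = 1 → k ≤ l)
    (hk₀_pos : 0 < k₀) (hk₀_mem : k₀ • u ∈ H)
    (hk₀_min : ∀ l : ℕ, 0 < l → l • u ∈ H → k₀ ≤ l) :
    (Nat.card {ψ : AddChar A ℂ // (∀ x : H, ψ x = χ x) ∧ ψ u ≠ 1} : ℚ) =
      if k₀ = k then (H.index : ℚ) * ((k : ℚ) - 1) / (k : ℚ)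
      else (H.index : ℚ) := by
  obtain ⟨ψ₀, hψ₀⟩ := AddChar.restrictHom_surjective H χ
  have hmem (l : ℕ) : l • (u : A ⧸ H) = 0 ↔ l • u ∈ H := by
    rw [← QuotientAddGroup.mk_nsmul, QuotientAddGroup.eq_zero_iff]
  have horder : addOrderOf (u : A ⧸ H) = k₀ := (addOrderOf_eq_iff hk₀_pos).2
    ⟨(hmem k₀).2 hk₀_mem, fun l hl hl₀ h => (hk₀_min l hl₀ ((hmem l).1 h)).not_gt hl⟩
  have hχ : χ ⟨k₀ • u, hk₀_mem⟩ = ψ₀ u ^ k₀ := by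
    rw [← hψ₀, AddChar.restrictHom_apply, ← AddChar.map_nsmul_eq_pow]
  have hroot : (ψ₀ u)⁻¹ ^ k₀ = 1 ↔ k₀ = k := by
    rw [inv_pow, inv_eq_one, ← hχ]
    refine ⟨fun h => le_antisymm (hk₀_min k hk_pos hk_mem) (hk_min k₀ hk₀_pos hk₀_mem h), ?_⟩
    rintro rfl
    exact hk_one
  obtain ⟨m, hm⟩ : k₀ ∣ H.index := horder ▸ addOrderOf_dvd_natCard _
  rw [AddChar.card_extension_apply_ne_one hψ₀, AddChar.card_apply_eq, horder,
    ← AddSubgroup.index_eq_card]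
  simp only [hroot]
  split_ifs with h
  · subst h
    rw [hm, Nat.mul_div_cancel_left _ hk₀_pos]
    push_cast [Nat.le_mul_of_pos_left m hk₀_pos]
    field_simp
  · simp
end

section
/- Let p be a prime. There exists a polynomial C(x,y) in two variables over the field ℤ/pℤ of total degree at most 2p−2 such that for all integers a, b with 0 ≤ a, b ≤ p−1, evaluating C at (a mod p, b mod p) gives 0 if a + b < p and gives 1 if a + b ≥ p. -/
theorem stmt_8 (p : ℕ) (hp : p.Prime) :
    ∃ C : MvPolynomial (Fin 2) (ZMod p),
      C.totalDegree ≤ 2 * p - 2 ∧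
        ∀ a b : ℕ, a ≤ p - 1 → b ≤ p - 1 →
          MvPolynomial.eval ![(a : ZMod p), (b : ZMod p)] C =
            if a + b < p then 0 else 1 := by
  haveI : Fact p.Prime := ⟨hp⟩
  classical
  set f : (Fin 2 → ZMod p) → ZMod p :=
    fun v => if (v 0).val + (v 1).val < p then 0 else 1 with hf
  refine ⟨∑ v : Fin 2 → ZMod p, f v • MvPolynomial.indicator v, ?_, ?_⟩
  · refine (MvPolynomial.totalDegree_finset_sum _ _).trans (Finset.sup_le fun v _ => ?_)
    refine (MvPolynomial.totalDegree_smul_le _ _).trans ?_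
    refine (MvPolynomial.totalDegree_le_degrees_card _).trans ?_
    refine le_trans (Multiset.card_le_card (MvPolynomial.degrees_indicator v)) ?_
    have : (∑ s : Fin 2, (Fintype.card (ZMod p) - 1) • ({s} : Multiset (Fin 2))).card
        = ∑ s : Fin 2, (Fintype.card (ZMod p) - 1) := by
      simp [Multiset.card_nsmul, two_mul]
    rw [this, ZMod.card]
    simp only [Finset.sum_const, Finset.card_univ, Fintype.card_fin, smul_eq_mul]
    omega
  · intro a b ha hb
    have hp2 := hp.two_le
    have hap : a < p := by omega
    have hbp : b < p := by omega
    have hval : ∀ n : ℕ, n < p → ((n : ZMod p)).val = n := fun n hn =>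
      ZMod.val_cast_of_lt hn
    set w : Fin 2 → ZMod p := ![(a : ZMod p), (b : ZMod p)] with hw
    have : MvPolynomial.eval w (∑ v : Fin 2 → ZMod p, f v • MvPolynomial.indicator v)
        = f w := by
      rw [map_sum]
      rw [Finset.sum_eq_single w]
      · rw [MvPolynomial.smul_eval, MvPolynomial.eval_indicator_apply_eq_one,
          mul_one]
      · intro v _ hv
        rw [MvPolynomial.smul_eval, MvPolynomial.eval_indicator_apply_eq_zero _ _ hv.symm,
          mul_zero]
      · intro h; exact absurd (Finset.mem_univ w) h
    rw [this, hf]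
    simp only [hw, Matrix.cons_val_zero, Matrix.cons_val_one, Matrix.head_cons,
      hval a hap, hval b hbp]
end

section
/- Let p be a prime and k ≥ 1, and let δ : ℤ/p^kℤ → (ℤ/pℤ)^k send each element to the sequence of base-p digits of its canonical representative in {0,…,p^k−1}. For every integer T ≥ 1 and every index i with 0 ≤ i ≤ k−1, there exists a polynomial Q_i over ℤ/pℤ in the T·k variables y_{t,j} (1 ≤ t ≤ T, 0 ≤ j ≤ k−1) of total degree at most (2p−2)^i, such that for all a₁,…,a_T ∈ ℤ/p^kℤ, the i-th base-p digit of the sum a₁+⋯+a_T (computed in ℤ/p^kℤ) equals the evaluation of Q_i at the values y_{t,j} = (j-th base-p digit of a_t). -/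
/-!
By Lucas' theorem the `i`-th base-`p` digit of `N` is `N.choose (p ^ i)` mod `p`, and reducing
mod `p ^ k` does not change the digits below `k`; take `N = ∑ₜ (aₜ).val = ∑_{t,j} d_{t,j} p ^ j`.
Over `ZMod p` we have `(1 + X) ^ (d * p ^ j) = (1 + X ^ p ^ j) ^ d`, and for a digit `d < p` this
is `∑_{u < p} d.choose u • X ^ (u * p ^ j)`, where `d.choose u = d (d - 1) ⋯ (d - u + 1) / u!` is a
polynomial of degree `u` in `d`. So the coefficient of `X ^ p ^ i` in the product over all `(t, j)`
is a polynomial in the digits of degree at most `p ^ i ≤ (2p - 2) ^ i`.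
-/

/-- The `i`-th base-`p` digit of the canonical representative of `x : ZMod (p ^ k)`,
as an element of `ZMod p`. -/
def baseDigit (p k : ℕ) (i : ℕ) (x : ZMod (p ^ k)) : ZMod p :=
  (((x.val / p ^ i) % p : ℕ) : ZMod p)

open Polynomial

namespace Nat

theorem sum_range_div_pow_mod_mul_pow (p n k : ℕ) :
    ∑ j ∈ Finset.range k, n / p ^ j % p * p ^ j = n % p ^ k := by
  induction k with
  | zero => simp [Nat.mod_one]
  | succ k ih =>
    rw [Finset.sum_range_succ, ih, pow_succ, Nat.mod_mul]
    ring

theorem mod_pow_div_pow_mod {p i k : ℕ} (hik : i < k) (n : ℕ) :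
    n % p ^ k / p ^ i % p = n / p ^ i % p := by
  obtain ⟨m, rfl⟩ := Nat.exists_eq_add_of_lt hik
  rw [add_assoc, pow_add, Nat.mod_mul_right_div_self, pow_succ', Nat.mod_mul_right_mod]

end Nat

theorem ZMod.natCast_choose_prime_pow (p : ℕ) [Fact p.Prime] (n i : ℕ) :
    ((n.choose (p ^ i) : ℕ) : ZMod p) = ((n / p ^ i % p : ℕ) : ZMod p) := by
  induction i generalizing n with
  | zero => simp [ZMod.natCast_mod]
  | succ i ih =>
    have hp : p.Prime := Fact.out
    have lucas := (ZMod.natCast_eq_natCast_iff _ _ _).mpr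
      (Choose.choose_modEq_choose_mod_mul_choose_div_nat (n := n) (k := p ^ (i + 1)) (p := p))
    rw [lucas, pow_succ, Nat.mul_mod_left, Nat.choose_zero_right, one_mul,
      Nat.mul_div_cancel _ hp.pos, ih, Nat.div_div_eq_div_mul, mul_comm]

theorem Polynomial.totalDegree_toMvPolynomial_le {R σ : Type*} [CommSemiring R] (i : σ)
    (q : R[X]) : (q.toMvPolynomial i).totalDegree ≤ q.natDegree := by
  conv_lhs => rw [q.as_sum_range_C_mul_X_pow]
  simp only [map_sum, map_mul, map_pow, toMvPolynomial_C, toMvPolynomial_X]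
  refine MvPolynomial.totalDegree_finsetSum_le fun n hn => ?_
  rw [MvPolynomial.C_mul_X_pow_eq_monomial]
  calc _ ≤ (Finsupp.single i n).sum fun _ e => e := MvPolynomial.totalDegree_monomial_le _ _
    _ = n := Finsupp.sum_single_index rfl
    _ ≤ q.natDegree := Nat.lt_succ_iff.mp (Finset.mem_range.mp hn)

theorem Polynomial.totalDegree_coeff_mul_le {R σ : Type*} [CommSemiring R]
    {f g : (MvPolynomial σ R)[X]} (hf : ∀ m, (f.coeff m).totalDegree ≤ m)
    (hg : ∀ m, (g.coeff m).totalDegree ≤ m) (m : ℕ) :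
    ((f * g).coeff m).totalDegree ≤ m := by
  rw [coeff_mul]
  refine MvPolynomial.totalDegree_finsetSum_le fun ab hab => ?_
  rw [Finset.HasAntidiagonal.mem_antidiagonal] at hab
  calc _ ≤ (f.coeff ab.1).totalDegree + (g.coeff ab.2).totalDegree :=
        MvPolynomial.totalDegree_mul _ _
    _ ≤ m := hab ▸ add_le_add (hf _) (hg _)

section binomial

variable (p : ℕ)

noncomputable def binomialPoly (u : ℕ) : (ZMod p)[X] :=
  C (u.factorial : ZMod p)⁻¹ * descPochhammer (ZMod p) u

theorem natDegree_binomialPoly_le [Fact p.Prime] (u : ℕ) : (binomialPoly p u).natDegree ≤ u :=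
  (natDegree_C_mul_le _ _).trans (descPochhammer_natDegree _ _).le

variable {p} [Fact p.Prime]

theorem eval_binomialPoly {u : ℕ} (hu : u < p) (d : ℕ) :
    (binomialPoly p u).eval (d : ZMod p) = (d.choose u : ZMod p) := by
  have hfact : (u.factorial : ZMod p) ≠ 0 := by
    rw [Ne, ZMod.natCast_eq_zero_iff, (Fact.out : p.Prime).dvd_factorial]
    omega
  rw [binomialPoly, eval_C_mul, descPochhammer_eval_eq_descFactorial,
    Nat.descFactorial_eq_factorial_mul_choose, Nat.cast_mul, inv_mul_cancel_left₀ hfact]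

theorem one_add_X_pow_mul_prime_pow {d : ℕ} (hd : d < p) (e : ℕ) :
    (1 + X : (ZMod p)[X]) ^ (d * p ^ e) =
      ∑ u ∈ Finset.range p, C (d.choose u : ZMod p) * X ^ (u * p ^ e) := by
  rw [mul_comm, pow_mul, add_pow_char_pow, one_pow, add_comm, add_pow]
  refine Finset.sum_subset_zero_on_sdiff (Finset.range_subset_range.mpr hd) ?_ ?_
  · intro u hu
    rw [Finset.mem_sdiff, Finset.mem_range, Finset.mem_range, not_lt] at hu
    rw [Nat.choose_eq_zero_of_lt (by omega), Nat.cast_zero, map_zero, zero_mul]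
  · intro u _
    rw [one_pow, mul_one, ← pow_mul, mul_comm (p ^ e), ← C_eq_natCast, mul_comm]

end binomial

section digitBinomialPoly

variable (p : ℕ) {σ : Type*}

noncomputable def digitBinomialPoly (v : σ) (e : ℕ) : (MvPolynomial σ (ZMod p))[X] :=
  ∑ u ∈ Finset.range p, C ((binomialPoly p u).toMvPolynomial v) * X ^ (u * p ^ e)

variable [Fact p.Prime]

theorem totalDegree_coeff_digitBinomialPoly_le (v : σ) (e m : ℕ) :
    ((digitBinomialPoly p v e).coeff m).totalDegree ≤ m := by
  rw [digitBinomialPoly, finsetSum_coeff]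
  refine MvPolynomial.totalDegree_finsetSum_le fun u _ => ?_
  rw [coeff_C_mul_X_pow]
  split_ifs with hm
  · calc _ ≤ (binomialPoly p u).natDegree := totalDegree_toMvPolynomial_le _ _
      _ ≤ u := natDegree_binomialPoly_le p u
      _ ≤ m := hm ▸ Nat.le_mul_of_pos_right u (pow_pos (Fact.out : p.Prime).pos e)
  · simp

variable {p}

theorem map_eval_digitBinomialPoly {x : σ → ZMod p} {v : σ} {d : ℕ} (hd : d < p) (hx : x v = d)
    (e : ℕ) : (digitBinomialPoly p v e).map (MvPolynomial.eval x) = (1 + X) ^ (d * p ^ e) := by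
  simp only [digitBinomialPoly, Polynomial.map_sum, Polynomial.map_mul, Polynomial.map_C,
    Polynomial.map_pow, Polynomial.map_X, one_add_X_pow_mul_prime_pow hd]
  refine Finset.sum_congr rfl fun u hu => ?_
  rw [MvPolynomial.eval_toMvPolynomial, hx, eval_binomialPoly (Finset.mem_range.mp hu)]

theorem exists_totalDegree_le_eval_eq_choose [Fintype σ] (e : σ → ℕ) (n : ℕ) :
    ∃ Q : MvPolynomial σ (ZMod p), Q.totalDegree ≤ n ∧ ∀ d : σ → ℕ, (∀ v, d v < p) →
      MvPolynomial.eval (fun v => (d v : ZMod p)) Q = ((∑ v, d v * p ^ e v).choose n : ZMod p) := by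
  refine ⟨(∏ v, digitBinomialPoly p v (e v)).coeff n, ?_, fun d hd => ?_⟩
  · refine Finset.prod_induction _
      (fun f : (MvPolynomial σ (ZMod p))[X] => ∀ m, (f.coeff m).totalDegree ≤ m)
      (fun _ _ => totalDegree_coeff_mul_le) (fun m => ?_)
      (fun v _ => totalDegree_coeff_digitBinomialPoly_le p v (e v)) n
    rw [coeff_one]
    split_ifs <;> simp
  · rw [← coeff_map, Polynomial.map_prod,
      Finset.prod_congr rfl fun v _ =>
        map_eval_digitBinomialPoly (x := fun v => (d v : ZMod p)) (hd v) rfl (e v),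
      Finset.prod_pow_eq_pow_sum, add_comm, coeff_X_add_one_pow]

end digitBinomialPoly

theorem stmt_9_general (p : ℕ) (hp : p.Prime) (k : ℕ) (T : ℕ)
    (i : ℕ) (hi : i < k) :
    ∃ Q : MvPolynomial (Fin T × Fin k) (ZMod p),
      Q.totalDegree ≤ (2 * p - 2) ^ i ∧
        ∀ a : Fin T → ZMod (p ^ k),
          baseDigit p k i (∑ t, a t) =
            MvPolynomial.eval (fun v => baseDigit p k (v.2 : ℕ) (a v.1)) Q := by
  have := Fact.mk hp
  have : NeZero (p ^ k) := ⟨pow_ne_zero k hp.ne_zero⟩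
  obtain ⟨Q, hdeg, heval⟩ :=
    exists_totalDegree_le_eval_eq_choose (p := p) (σ := Fin T × Fin k) (fun v => (v.2 : ℕ)) (p ^ i)
  refine ⟨Q, hdeg.trans (Nat.pow_le_pow_left (by have := hp.two_le; omega) i), fun a => ?_⟩
  set N := ∑ t, (a t).val
  have hdigits : ∑ v : Fin T × Fin k, (a v.1).val / p ^ (v.2 : ℕ) % p * p ^ (v.2 : ℕ) = N := by
    rw [Fintype.sum_prod_type]
    refine Finset.sum_congr rfl fun t _ => ?_
    rw [Fin.sum_univ_eq_sum_range (fun j => (a t).val / p ^ j % p * p ^ j),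
      Nat.sum_range_div_pow_mod_mul_pow, Nat.mod_eq_of_lt (ZMod.val_lt _)]
  have hval : (∑ t, a t).val = N % p ^ k := by
    rw [← ZMod.val_natCast, Nat.cast_sum]
    simp only [ZMod.natCast_val, ZMod.cast_id', id]
  calc baseDigit p k i (∑ t, a t) = ((N / p ^ i % p : ℕ) : ZMod p) := by
        rw [baseDigit, hval, Nat.mod_pow_div_pow_mod hi]
    _ = ((N.choose (p ^ i) : ℕ) : ZMod p) := (ZMod.natCast_choose_prime_pow p N i).symm
    _ = _ := by
        rw [← hdigits]
        exact (heval _ fun v => Nat.mod_lt _ hp.pos).symm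

theorem stmt_9 (p : ℕ) (hp : p.Prime) (k : ℕ) (hk : 1 ≤ k) (T : ℕ) (hT : 1 ≤ T)
    (i : ℕ) (hi : i < k) :
    ∃ Q : MvPolynomial (Fin T × Fin k) (ZMod p),
      Q.totalDegree ≤ (2 * p - 2) ^ i ∧
        ∀ a : Fin T → ZMod (p ^ k),
          baseDigit p k i (∑ t, a t) =
            MvPolynomial.eval (fun v => baseDigit p k (v.2 : ℕ) (a v.1)) Q :=
  stmt_9_general p hp k T i hi
end

section
/- Let p be a prime, k ≥ 1 and n ≥ 1, and let δ : ℤ/p^kℤ → (ℤ/pℤ)^k be the base-p digit map, extended coordinatewise to a map δ : (ℤ/p^kℤ)^n → (ℤ/pℤ)^{nk}. For every u ∈ (ℤ/p^kℤ)^n and every index i with 0 ≤ i ≤ k−1, there exists a polynomial Q_i over ℤ/pℤ in nk variables of total degree at most (2p−2)^i such that for every a ∈ (ℤ/p^kℤ)^n, the i-th base-p digit of the scalar product a·u = ∑_{s=1}^n a_s u_s (computed in ℤ/p^kℤ) equals Q_i evaluated at δ(a). -/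
open Finset MvPolynomial

section PolynomialFunctions

variable {σ R : Type*} [CommSemiring R]

def IsPolyFunOfDegLE (r : ℕ) (f : (σ → R) → R) : Prop :=
  ∃ Q : MvPolynomial σ R, Q.totalDegree ≤ r ∧ ∀ x, f x = eval x Q

namespace IsPolyFunOfDegLE

variable {r r' : ℕ} {f g : (σ → R) → R}

theorem const (c : R) : IsPolyFunOfDegLE 0 (fun _ : σ → R => c) :=
  ⟨C c, (totalDegree_C c).le, fun _ => (eval_C c).symm⟩

theorem mono (hf : IsPolyFunOfDegLE r f) (hr : r ≤ r') : IsPolyFunOfDegLE r' f :=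
  let ⟨Q, hQ, hfQ⟩ := hf
  ⟨Q, hQ.trans hr, hfQ⟩

theorem congr (hf : IsPolyFunOfDegLE r f) (hfg : ∀ x, f x = g x) : IsPolyFunOfDegLE r g :=
  let ⟨Q, hQ, hfQ⟩ := hf
  ⟨Q, hQ, fun x => (hfg x).symm.trans (hfQ x)⟩

theorem add (hf : IsPolyFunOfDegLE r f) (hg : IsPolyFunOfDegLE r g) :
    IsPolyFunOfDegLE r (fun x => f x + g x) :=
  let ⟨P, hP, hfP⟩ := hf
  let ⟨Q, hQ, hgQ⟩ := hg
  ⟨P + Q, (totalDegree_add P Q).trans (max_le hP hQ), fun x => by simp [hfP, hgQ]⟩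

theorem mul (hf : IsPolyFunOfDegLE r f) (hg : IsPolyFunOfDegLE r' g) :
    IsPolyFunOfDegLE (r + r') (fun x => f x * g x) :=
  let ⟨P, hP, hfP⟩ := hf
  let ⟨Q, hQ, hgQ⟩ := hg
  ⟨P * Q, (totalDegree_mul P Q).trans (add_le_add hP hQ), fun x => by simp [hfP, hgQ]⟩

theorem finset_sum {ι : Type*} (s : Finset ι) {f : ι → (σ → R) → R}
    (hf : ∀ i ∈ s, IsPolyFunOfDegLE r (f i)) :
    IsPolyFunOfDegLE r (fun x => ∑ i ∈ s, f i x) := by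
  classical
  induction s using Finset.induction_on with
  | empty => simpa using (const (σ := σ) (0 : R)).mono (Nat.zero_le r)
  | insert i s hi ih =>
    simp_rw [sum_insert hi]
    exact (hf i (mem_insert_self i s)).add (ih fun j hj => hf j (mem_insert_of_mem hj))

theorem polynomial_eval (q : Polynomial R) (a : σ) :
    IsPolyFunOfDegLE q.natDegree (fun x : σ → R => q.eval (x a)) := by
  refine ⟨Polynomial.aeval (X a) q, ?_, fun x => ?_⟩
  · rw [Polynomial.aeval_eq_sum_range]
    refine (totalDegree_finsetSum _ _).trans (Finset.sup_le fun j hj => ?_)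
    calc (q.coeff j • X a ^ j : MvPolynomial σ R).totalDegree
        ≤ (monomial (Finsupp.single a j) 1 : MvPolynomial σ R).totalDegree := by
          rw [← X_pow_eq_monomial]; exact totalDegree_smul_le _ _
      _ ≤ j := (totalDegree_monomial_le _ _).trans (by simp)
      _ ≤ q.natDegree := Nat.lt_succ_iff.mp (mem_range.mp hj)
  · rw [← aeval_eq_eval, ← Polynomial.aeval_algHom_apply, aeval_X,
      Polynomial.coe_aeval_eq_eval]

end IsPolyFunOfDegLE

end PolynomialFunctions

section Binomial

variable {σ : Type*} {p : ℕ} [hp : Fact p.Prime]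

theorem isPolyFunOfDegLE_choose_val (a : σ) (e : ℕ) :
    IsPolyFunOfDegLE e (fun x : σ → ZMod p => ((x a).val.choose e : ZMod p)) := by
  refine ((IsPolyFunOfDegLE.polynomial_eval
    (Polynomial.C ((e.factorial : ZMod p)⁻¹) * descPochhammer (ZMod p) e) a).mono
    ((Polynomial.natDegree_C_mul_le _ _).trans (descPochhammer_natDegree _ e).le)).congr
    fun x => ?_
  have hval : ((x a).val : ZMod p) = x a := ZMod.natCast_zmod_val (x a)
  conv_lhs => rw [Polynomial.eval_mul, Polynomial.eval_C, ← hval,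
    descPochhammer_eval_eq_descFactorial, Nat.descFactorial_eq_factorial_mul_choose, Nat.cast_mul]
  rcases lt_or_ge e p with he | he
  · have hfac : (e.factorial : ZMod p) ≠ 0 := by
      rw [Ne, ZMod.natCast_eq_zero_iff, hp.out.dvd_factorial]
      exact Nat.not_le.mpr he
    rw [inv_mul_cancel_left₀ hfac]
  · -- `e ≥ p`: both sides vanish, as `p ∣ e!` and `(x a).val < p ≤ e`
    rw [(ZMod.natCast_eq_zero_iff _ p).mpr (Nat.dvd_factorial hp.out.pos he),
      Nat.choose_eq_zero_of_lt ((ZMod.val_lt (x a)).trans_le he)]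
    simp

theorem isPolyFunOfDegLE_choose_sum_val {ι : Type*} (f : ι → σ) (s : Finset ι) (r : ℕ) :
    IsPolyFunOfDegLE r
      (fun x : σ → ZMod p => ((∑ j ∈ s, (x (f j)).val).choose r : ZMod p)) := by
  classical
  induction s using Finset.induction_on generalizing r with
  | empty =>
    exact ((IsPolyFunOfDegLE.const ((Nat.choose 0 r : ℕ) : ZMod p)).mono (Nat.zero_le r)).congr
      fun x => by rw [sum_empty]
  | insert j s hj ih =>
    refine (IsPolyFunOfDegLE.finset_sum (antidiagonal r) fun e he =>
      ((isPolyFunOfDegLE_choose_val (f j) e.1).mul (ih e.2)).mono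
        (mem_antidiagonal.mp he).le).congr fun x => ?_
    rw [sum_insert hj, Nat.add_choose_eq, Nat.cast_sum]
    simp only [Nat.cast_mul]

theorem isPolyFunOfDegLE_choose_sum_mul_val (c : σ → ℕ) (s : Finset σ) (r : ℕ) :
    IsPolyFunOfDegLE r
      (fun x : σ → ZMod p => ((∑ t ∈ s, c t * (x t).val).choose r : ZMod p)) :=
  (isPolyFunOfDegLE_choose_sum_val Sigma.fst (s.sigma fun t => range (c t)) r).congr
    fun x => by simp [sum_sigma]

end Binomial

theorem Nat.sum_range_div_pow_mod_mul_pow_s10 (m b k : ℕ) :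
    ∑ j ∈ range k, m / b ^ j % b * b ^ j = m % b ^ k := by
  induction k with
  | zero => simp [Nat.mod_one]
  | succ k ih =>
    rw [sum_range_succ, ih, pow_succ, Nat.mod_mul]
    ring

section Digits

variable {p : ℕ}

theorem val_baseDigit (k j : ℕ) (x : ZMod (p ^ k)) : (baseDigit p k j x).val = x.val / p ^ j % p := by
  rw [baseDigit, ZMod.val_natCast, Nat.mod_mod]

section NeZero

variable [NeZero p]

theorem sum_val_baseDigit_mul_pow (k : ℕ) (x : ZMod (p ^ k)) :
    ∑ j : Fin k, (baseDigit p k j x).val * p ^ (j : ℕ) = x.val := by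
  simp_rw [val_baseDigit]
  rw [Fin.sum_univ_eq_sum_range (fun j => x.val / p ^ j % p * p ^ j),
    Nat.sum_range_div_pow_mod_mul_pow_s10, Nat.mod_eq_of_lt (ZMod.val_lt x)]

theorem sum_mul_eq_natCast_sum_baseDigit {n k : ℕ} (a u : Fin n → ZMod (p ^ k)) :
    ∑ s, a s * u s = ((∑ v : Fin n × Fin k,
      (u v.1).val * p ^ (v.2 : ℕ) * (baseDigit p k v.2 (a v.1)).val : ℕ) : ZMod (p ^ k)) := by
  have hrow : ∀ s, ∑ j : Fin k, (u s).val * p ^ (j : ℕ) * (baseDigit p k j (a s)).val =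
      (u s).val * (a s).val := fun s => by
    rw [← sum_val_baseDigit_mul_pow k (a s), mul_sum]
    exact sum_congr rfl fun j _ => by ring
  rw [Fintype.sum_prod_type, sum_congr rfl fun s _ => hrow s]
  push_cast [ZMod.natCast_val, ZMod.cast_id]
  exact sum_congr rfl fun s _ => mul_comm _ _

end NeZero

variable [hp : Fact p.Prime]

theorem Choose.choose_pow_modEq_div (N i : ℕ) : N.choose (p ^ i) ≡ ↑(N / p ^ i) [ZMOD p] := by
  induction i generalizing N with
  | zero => simp [Int.ModEq.refl]
  | succ i ih =>
    grw [Choose.choose_modEq_choose_mod_mul_choose_div, pow_succ', Nat.mul_mod_right,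
      Nat.mul_div_cancel_left _ hp.out.pos, ih, Nat.div_div_eq_div_mul]
    simp [Int.ModEq.refl]

theorem baseDigit_natCast {k i : ℕ} (hi : i < k) (N : ℕ) :
    baseDigit p k i (N : ZMod (p ^ k)) = N.choose (p ^ i) := by
  have hk : p ^ k = p ^ i * p ^ (k - i) := by rw [← pow_add, Nat.add_sub_cancel' hi.le]
  rw [baseDigit, ZMod.val_natCast, hk, Nat.mod_mul_right_div_self,
    Nat.mod_mod_of_dvd _ (dvd_pow_self p (Nat.sub_ne_zero_of_lt hi)), ZMod.natCast_mod]
  exact_mod_cast ((ZMod.intCast_eq_intCast_iff _ _ p).mpr (Choose.choose_pow_modEq_div N i)).symm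

end Digits

theorem stmt_10_general (p : ℕ) (hp : p.Prime) (k n : ℕ)
    (u : Fin n → ZMod (p ^ k)) (i : ℕ) (hi : i < k) :
    ∃ Q : MvPolynomial (Fin n × Fin k) (ZMod p),
      Q.totalDegree ≤ (2 * p - 2) ^ i ∧
        ∀ a : Fin n → ZMod (p ^ k),
          baseDigit p k i (∑ s, a s * u s) =
            MvPolynomial.eval (fun v => baseDigit p k (v.2 : ℕ) (a v.1)) Q := by
  have := Fact.mk hp
  obtain ⟨Q, hQ, hQeval⟩ := isPolyFunOfDegLE_choose_sum_mul_val (p := p)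
    (fun v : Fin n × Fin k => (u v.1).val * p ^ (v.2 : ℕ)) univ (p ^ i)
  refine ⟨Q, hQ.trans (Nat.pow_le_pow_left (by have := hp.two_le; omega) i), fun a => ?_⟩
  rw [sum_mul_eq_natCast_sum_baseDigit, baseDigit_natCast hi, ← hQeval]

theorem stmt_10 (p : ℕ) (hp : p.Prime) (k n : ℕ) (hk : 1 ≤ k) (hn : 1 ≤ n)
    (u : Fin n → ZMod (p ^ k)) (i : ℕ) (hi : i < k) :
    ∃ Q : MvPolynomial (Fin n × Fin k) (ZMod p),
      Q.totalDegree ≤ (2 * p - 2) ^ i ∧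
        ∀ a : Fin n → ZMod (p ^ k),
          baseDigit p k i (∑ s, a s * u s) =
            MvPolynomial.eval (fun v => baseDigit p k (v.2 : ℕ) (a v.1)) Q :=
  stmt_10_general p hp k n u i hi
end
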